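/- arXiv:0710.3426 — 3 statements merged into one kernel-verified Lean document; each statement's English description precedes it below -/
import Mathlib

section
/- Let α and β be actions of groups G and H on sets X and Y respectively. Then the action groupoids X ×_α G and Y ×_β H are isomorphic as groupoids if and only if there exists a bijection ψ : X → Y such that the restriction of ψ to each orbit O of α is a bijection onto an orbit of β whose stabilizer subgroup (in H) is isomorphic to the stabilizer subgroup of O (in G). -/
universe u v

/-- A "small category" structure given purely on the set of morphisms, as in the paper:
source and target maps `s, t : M → M` (objects are identified with identity morphisms)
and a (total, but only partially meaningful) composition `mul`. -/
structure CatStruct (M : Type u) where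
  s : M → M
  t : M → M
  mul : M → M → M

namespace CatStruct

variable {M : Type u}

/-- An element is an object (identity morphism) if it is its own source and target. -/
def Obj (C : CatStruct M) (u : M) : Prop := C.s u = u ∧ C.t u = u

/-- The axioms of a small category, restricted to the morphisms satisfying `P`. -/
def IsCatOn (C : CatStruct M) (P : M → Prop) : Prop :=
  (∀ h, P h → P (C.s h) ∧ C.Obj (C.s h)) ∧
  (∀ h, P h → P (C.t h) ∧ C.Obj (C.t h)) ∧
  (∀ h h', P h → P h' → C.s h = C.t h' →
      P (C.mul h h') ∧ C.s (C.mul h h') = C.s h' ∧ C.t (C.mul h h') = C.t h) ∧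
  (∀ a b c, P a → P b → P c → C.s a = C.t b → C.s b = C.t c →
      C.mul (C.mul a b) c = C.mul a (C.mul b c)) ∧
  (∀ h, P h → C.mul (C.t h) h = h ∧ C.mul h (C.s h) = h)

def IsCat (C : CatStruct M) : Prop := C.IsCatOn (fun _ => True)

/-- Groupoid axioms restricted to morphisms satisfying `P`. -/
def IsGroupoidOn (C : CatStruct M) (inv : M → M) (P : M → Prop) : Prop :=
  C.IsCatOn P ∧
  ∀ h, P h → P (inv h) ∧ C.s (inv h) = C.t h ∧ C.t (inv h) = C.s h ∧
      C.mul h (inv h) = C.t h ∧ C.mul (inv h) h = C.s h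

def IsGroupoid (C : CatStruct M) (inv : M → M) : Prop := C.IsGroupoidOn inv (fun _ => True)

/-- There is a morphism with target `x` and source `y` (i.e. `ₓH_y ≠ ∅`). -/
def Reach (C : CatStruct M) (x y : M) : Prop := ∃ h, C.t h = x ∧ C.s h = y

end CatStruct

section Action

variable {MG : Type u} {MH : Type v}

/-- `(g,h) ∈ G ×^φ H`, i.e. `s(g) = φ(t(h)) = φ(s(h))`. -/
def CompPair (C : CatStruct MG) (D : CatStruct MH) (φ : MH → MG) (g : MG) (h : MH) : Prop :=
  C.s g = φ (D.t h) ∧ C.s g = φ (D.s h)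

/-- A left action `(φ, α)` of the category `G` (structure `C`) on the category `H`
(structure `D`): axioms (0)-(VI) of the paper, together with the requirement that `φ`
maps objects of `H` to objects of `G`. -/
def IsLeftAction (C : CatStruct MG) (D : CatStruct MH) (φ : MH → MG)
    (α : MG → MH → MH) : Prop :=
  (∀ u, D.Obj u → C.Obj (φ u)) ∧
  (∀ g u, D.Obj u → CompPair C D φ g u → D.s (α g u) = D.t (α g u)) ∧
  (∀ g h, CompPair C D φ g h → D.s (α g (D.s h)) = D.s (α g h)) ∧
  (∀ g h, CompPair C D φ g h → D.t (α g (D.t h)) = D.t (α g h)) ∧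
  (∀ g u, D.Obj u → CompPair C D φ g u → φ (D.s (α g u)) = C.t g) ∧
  (∀ h, α (φ (D.t h)) h = h) ∧
  (∀ g' g h, CompPair C D φ g h → C.s g' = C.t g → α g' (α g h) = α (C.mul g' g) h) ∧
  (∀ g h' h, D.s h' = D.t h → CompPair C D φ g h → CompPair C D φ g h' →
      α g (D.mul h' h) = D.mul (α g h') (α g h))

end Action

open Classical

/-- The action (semi-direct product) groupoid `X ×_α G` of a group action:
morphisms `(x, g)` with source `x`, target `g • x`, and
composition `(g•x, g')(x, g) = (x, g'g)`. Objects are the pairs `(x, 1)`. -/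
noncomputable def actionCat (G : Type u) (X : Type v) [Group G] [MulAction G X] :
    CatStruct (X × G) where
  s p := (p.1, 1)
  t p := (p.2 • p.1, 1)
  mul a b := if a.1 = b.2 • b.1 then (b.1, a.2 * b.2) else a

/-! STATEMENT 7: `X ×_α G ≅ Y ×_β H` as groupoids iff there is a bijection
`ψ : X → Y` carrying each orbit of `α` bijectively onto an orbit of `β` with
isomorphic stabilizer subgroup. -/

open MulAction in
lemma theta_apply_congr {G H : Type*} [Group G] [Group H] {X Y : Type*}
    [MulAction G X] [MulAction H Y] {f : X → Y}
    (Θ : ∀ z : X, MulAction.stabilizer G z ≃* MulAction.stabilizer H (f z))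
    {z z' : X} (h : z = z') {a : G} (ha : a ∈ MulAction.stabilizer G z)
    (ha' : a ∈ MulAction.stabilizer G z') :
    ((Θ z ⟨a, ha⟩ : MulAction.stabilizer H (f z)) : H)
      = ((Θ z' ⟨a, ha'⟩ : MulAction.stabilizer H (f z')) : H) := by
  subst h; rfl

open MulAction

theorem statement7 (G : Type u) (H : Type u) (X : Type v) (Y : Type v)
    [Group G] [Group H] [MulAction G X] [MulAction H Y] :
    (∃ Φ : X × G → Y × H,
      Function.Bijective Φ ∧
      (∀ p, (actionCat H Y).s (Φ p) = Φ ((actionCat G X).s p) ∧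
            (actionCat H Y).t (Φ p) = Φ ((actionCat G X).t p)) ∧
      (∀ p q, (actionCat G X).s p = (actionCat G X).t q →
          Φ ((actionCat G X).mul p q) = (actionCat H Y).mul (Φ p) (Φ q)))
    ↔
    (∃ ψ : X ≃ Y, ∀ x : X,
      ψ '' (MulAction.orbit G x) = MulAction.orbit H (ψ x) ∧
      Nonempty (MulAction.stabilizer G x ≃* MulAction.stabilizer H (ψ x))) := by
  constructor
  · rintro ⟨Φ, hbij, hst, hmul⟩
    have hs : ∀ p : X × G, ((Φ p).1, (1 : H)) = Φ (p.1, 1) := fun p => (hst p).1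
    have htt : ∀ p : X × G, ((Φ p).2 • (Φ p).1, (1 : H)) = Φ (p.2 • p.1, 1) := fun p => (hst p).2
    set ψ0 : X → Y := fun x => (Φ (x, 1)).1 with hψ0
    have hid : ∀ x : X, Φ (x, 1) = (ψ0 x, 1) := fun x => (hs (x, 1)).symm
    have hfst : ∀ (x : X) (g : G), (Φ (x, g)).1 = ψ0 x := by
      intro x g
      have h1 := hs (x, g)
      rw [hid x] at h1
      exact (Prod.ext_iff.1 h1).1
    have hact : ∀ (x : X) (g : G), (Φ (x, g)).2 • ψ0 x = ψ0 (g • x) := by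
      intro x g
      have h1 := htt (x, g)
      rw [hid (g • x), hfst x g] at h1
      exact (Prod.ext_iff.1 h1).1
    have hinj : Function.Injective ψ0 := by
      intro x x' hxx'
      have : Φ (x, 1) = Φ (x', 1) := by rw [hid, hid, hxx']
      exact (Prod.ext_iff.1 (hbij.1 this)).1
    have hsurj : Function.Surjective ψ0 := by
      intro y
      obtain ⟨p, hp⟩ := hbij.2 (y, 1)
      refine ⟨p.1, ?_⟩
      have h1 := hs p
      rw [hp, hid] at h1
      exact ((Prod.ext_iff.1 h1).1).symm
    refine ⟨Equiv.ofBijective ψ0 ⟨hinj, hsurj⟩, fun x => ⟨?_, ⟨?_⟩⟩⟩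
    · ext y'
      constructor
      · rintro ⟨x'', ⟨g, rfl⟩, rfl⟩
        exact ⟨(Φ (x, g)).2, hact x g⟩
      · rintro ⟨h, rfl⟩
        obtain ⟨p, hp⟩ := hbij.2 (ψ0 x, h)
        have hp1 : p.1 = x := by
          have h1 := hs p
          rw [hp, hid] at h1
          exact hinj ((Prod.ext_iff.1 h1).1).symm
        have h2 := hact p.1 p.2
        rw [hp, hp1] at h2
        exact ⟨p.2 • x, mem_orbit x p.2, h2.symm⟩
    · -- stabilizer iso
      have hσmem : ∀ g : stabilizer G x, (Φ (x, (g : G))).2 ∈ stabilizer H (ψ0 x) := by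
        intro g
        have := hact x g
        rw [g.2] at this
        exact this
      have hσmul : ∀ g g' : G, g' • x = x →
          (Φ (x, g * g')).2 = (Φ (x, g)).2 * (Φ (x, g')).2 := by
        intro g g' hg'
        have hcomp : (actionCat G X).s ((x, g) : X × G) = (actionCat G X).t ((x, g') : X × G) := by
          show ((x, (1:G)) : X × G) = (g' • x, 1)
          rw [hg']
        have h1 := hmul (x, g) (x, g') hcomp
        have hm1 : (actionCat G X).mul (x, g) (x, g') = (x, g * g') := by
          show (if x = g' • x then ((x, g * g') : X × G) else (x, g)) = (x, g * g')
          rw [if_pos hg'.symm]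
        have hcond : (Φ ((x, g) : X × G)).1 = (Φ ((x, g') : X × G)).2 • (Φ ((x, g') : X × G)).1 := by
          rw [hfst, hfst, hact x g', hg']
        have hm2 : (actionCat H Y).mul (Φ (x, g)) (Φ (x, g')) =
            ((Φ (x, g')).1, (Φ (x, g)).2 * (Φ (x, g')).2) := by
          show (if (Φ ((x,g) : X × G)).1 = (Φ ((x,g') : X × G)).2 • (Φ ((x,g') : X × G)).1 then
              ((Φ ((x,g') : X×G)).1, (Φ ((x,g):X×G)).2 * (Φ ((x,g'):X×G)).2) else Φ (x, g)) = _
          rw [if_pos hcond]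
        rw [hm1, hm2] at h1
        exact (Prod.ext_iff.1 h1).2
      let f : stabilizer G x →* stabilizer H (ψ0 x) :=
        { toFun := fun g => ⟨(Φ (x, (g : G))).2, hσmem g⟩,
          map_one' := by
            ext
            show (Φ (x, (1:G))).2 = 1
            rw [hid],
          map_mul' := by
            intro g g'
            ext
            exact hσmul g g' g'.2 }
      refine MulEquiv.ofBijective f ⟨?_, ?_⟩
      · intro g g' hgg'
        have h2 : Φ (x, (g : G)) = Φ (x, (g' : G)) := by
          have hv : (Φ (x, (g:G))).2 = (Φ (x, (g':G))).2 := congrArg Subtype.val hgg'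
          exact Prod.ext (by rw [hfst, hfst]) hv
        exact Subtype.ext ((Prod.ext_iff.1 (hbij.1 h2)).2)
      · rintro ⟨h, hh⟩
        obtain ⟨p, hp⟩ := hbij.2 (ψ0 x, h)
        have hp1 : p.1 = x := by
          have h1 := hs p
          rw [hp, hid] at h1
          exact hinj ((Prod.ext_iff.1 h1).1).symm
        have hval : (Φ (x, p.2)).2 = h := by
          rw [← hp1]
          exact congrArg Prod.snd hp
        have h2 := hact p.1 p.2
        rw [hp1] at h2
        have hpst : p.2 • x = x := by
          apply hinj
          rw [← h2, hval]
          exact hh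
        refine ⟨⟨p.2, hpst⟩, ?_⟩
        ext
        exact hval
  · rintro ⟨ψ, hψ⟩
    -- basepoint of each orbit
    set b : X → X := fun x => (⟦x⟧ : Quotient (orbitRel G X)).out with hbdef
    have hbrel : ∀ x : X, b x ∈ orbit G x := by
      intro x
      have h1 : (⟦b x⟧ : Quotient (orbitRel G X)) = ⟦x⟧ := Quotient.out_eq _
      rwa [Quotient.eq, orbitRel_apply] at h1
    have hbsmul : ∀ (g : G) (x : X), b (g • x) = b x := by
      intro g x
      show (⟦g • x⟧ : Quotient (orbitRel G X)).out = (⟦x⟧ : Quotient (orbitRel G X)).out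
      congr 1
      exact Quotient.sound (mem_orbit x g)
    have hbb : ∀ x : X, b (b x) = b x := by
      intro x
      obtain ⟨g, hg⟩ := hbrel x
      have hg' : g • x = b x := hg
      rw [← hg', hbsmul]
      exact hg'.symm
    -- transversal t : X → G with t x • b x = x
    have hex : ∀ x : X, ∃ g : G, g • b x = x := by
      intro x
      obtain ⟨g, hg⟩ := hbrel x
      exact ⟨g⁻¹, by rw [← hg, inv_smul_smul]⟩
    choose tr htr using hex
    -- transversal k : X → H with k x • ψ (b x) = ψ x
    have hexk : ∀ x : X, ∃ h : H, h • ψ (b x) = ψ x := by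
      intro x
      have h1 : ψ x ∈ orbit H (ψ (b x)) := by
        rw [← (hψ (b x)).1]
        exact ⟨x, ⟨tr x, htr x⟩, rfl⟩
      obtain ⟨h, hh⟩ := h1
      exact ⟨h, hh⟩
    choose k hk using hexk
    -- stabilizer isos
    have Θ : ∀ z : X, MulAction.stabilizer G z ≃* MulAction.stabilizer H (ψ z) :=
      fun z => (hψ z).2.some
    -- key membership
    have hmem : ∀ (g : G) (x : X), (tr (g • x))⁻¹ * g * tr x ∈ stabilizer G (b x) := by
      intro g x
      have h1 : tr (g • x) • b x = g • x := by
        have := htr (g • x); rwa [hbsmul] at this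
      rw [mem_stabilizer_iff, mul_smul, mul_smul, htr x, inv_smul_eq_iff]
      exact h1.symm
    set σ : X → G → H := fun x g =>
      k (g • x) * ((Θ (b x) ⟨(tr (g • x))⁻¹ * g * tr x, hmem g x⟩ : stabilizer H (ψ (b x))) : H)
        * (k x)⁻¹ with hσdef
    have hσ1 : ∀ x : X, σ x 1 = 1 := by
      intro x
      have he : (⟨(tr ((1:G) • x))⁻¹ * 1 * tr x, hmem 1 x⟩ : stabilizer G (b x)) = 1 := by
        ext
        show (tr ((1:G) • x))⁻¹ * 1 * tr x = 1
        rw [one_smul, mul_one, inv_mul_cancel]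
      show k ((1:G) • x) * _ * (k x)⁻¹ = 1
      rw [he, map_one]
      rw [one_smul]
      simp
    have hσact : ∀ (x : X) (g : G), σ x g • ψ x = ψ (g • x) := by
      intro x g
      show (k (g • x) * _ * (k x)⁻¹) • ψ x = ψ (g • x)
      rw [mul_smul, mul_smul]
      have h3 : (k x)⁻¹ • ψ x = ψ (b x) := by rw [inv_smul_eq_iff, hk x]
      rw [h3]
      have h2 := (Θ (b x) ⟨(tr (g • x))⁻¹ * g * tr x, hmem g x⟩).2
      rw [mem_stabilizer_iff] at h2
      rw [h2, ← hbsmul g x]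
      exact hk (g • x)
    have hσmul : ∀ (x : X) (g g' : G), σ (g • x) g' * σ x g = σ x (g' * g) := by
      intro x g g'
      have hms : (g' * g) • x = g' • g • x := mul_smul g' g x
      have hmem1 : (tr (g' • g • x))⁻¹ * g' * tr (g • x) ∈ stabilizer G (b x) := by
        rw [← hbsmul g x]; exact hmem g' (g • x)
      have hθ1 : ((Θ (b (g • x)) ⟨(tr (g' • g • x))⁻¹ * g' * tr (g • x), hmem g' (g • x)⟩ :
            stabilizer H (ψ (b (g • x)))) : H)
          = ((Θ (b x) ⟨(tr (g' • g • x))⁻¹ * g' * tr (g • x), hmem1⟩ :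
            stabilizer H (ψ (b x))) : H) :=
        theta_apply_congr Θ (hbsmul g x) _ _
      have hsub : (⟨(tr ((g' * g) • x))⁻¹ * (g' * g) * tr x, hmem (g' * g) x⟩ :
            stabilizer G (b x))
          = ⟨(tr (g' • g • x))⁻¹ * g' * tr (g • x), hmem1⟩ *
            ⟨(tr (g • x))⁻¹ * g * tr x, hmem g x⟩ := by
        ext
        show (tr ((g' * g) • x))⁻¹ * (g' * g) * tr x
          = ((tr (g' • g • x))⁻¹ * g' * tr (g • x)) * ((tr (g • x))⁻¹ * g * tr x)
        rw [hms]
        group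
      have hk2 : k ((g' * g) • x) = k (g' • g • x) := congrArg k hms
      show (k (g' • g • x) * _ * (k (g • x))⁻¹) * (k (g • x) * _ * (k x)⁻¹)
          = k ((g' * g) • x) * _ * (k x)⁻¹
      rw [hθ1, hk2, hsub, map_mul, Submonoid.coe_mul]
      group
    have hinjσ : ∀ (x : X) (g g' : G), σ x g = σ x g' → g = g' := by
      intro x g g' hgg'
      have hxx : g • x = g' • x := by
        apply ψ.injective
        rw [← hσact x g, ← hσact x g', hgg']
      have hgg2 := hgg'
      simp only [hσdef] at hgg2
      have hkk : k (g • x) = k (g' • x) := congrArg k hxx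
      rw [hkk] at hgg2
      have hc1 := mul_left_cancel (mul_right_cancel hgg2)
      have hc2 := (Θ (b x)).injective (Subtype.ext hc1)
      have hc3 : (tr (g • x))⁻¹ * g * tr x = (tr (g' • x))⁻¹ * g' * tr x :=
        congrArg Subtype.val hc2
      rw [hxx] at hc3
      exact mul_left_cancel (mul_right_cancel hc3)
    have hsurjσ : ∀ (y : Y) (h : H), ∃ (x : X) (g : G), ψ x = y ∧ σ x g = h := by
      intro y h
      set x := ψ.symm y with hxdef
      have hx : ψ x = y := ψ.apply_symm_apply y
      have h1 : h • ψ x ∈ orbit H (ψ (b x)) := by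
        refine ⟨h * k x, ?_⟩
        show (h * k x) • ψ (b x) = h • ψ x
        rw [mul_smul, hk x]
      rw [← (hψ (b x)).1] at h1
      obtain ⟨x'', hx''orb, hx''⟩ := h1
      have hbx'' : b x'' = b x := by
        obtain ⟨g₀, hg₀⟩ := hx''orb
        have hg₀' : g₀ • b x = x'' := hg₀
        rw [← hg₀', hbsmul, hbb]
      have smem : (k x'')⁻¹ * h * k x ∈ stabilizer H (ψ (b x)) := by
        rw [mem_stabilizer_iff, mul_smul, mul_smul, hk x, inv_smul_eq_iff]
        rw [← hbx'', hk x'']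
        exact hx''.symm
      set gG := (Θ (b x)).symm ⟨(k x'')⁻¹ * h * k x, smem⟩ with hgGdef
      set g := tr x'' * (gG : G) * (tr x)⁻¹ with hgdef
      have hgx : g • x = x'' := by
        have hbase : (tr x)⁻¹ • x = b x := by rw [inv_smul_eq_iff, htr x]
        have hstab : (gG : G) • b x = b x := gG.2
        show (tr x'' * (gG : G) * (tr x)⁻¹) • x = x''
        rw [mul_smul, mul_smul, hbase, hstab, ← hbx'', htr x'']
      refine ⟨x, g, hx, ?_⟩
      have helem : (tr (g • x))⁻¹ * g * tr x = (gG : G) := by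
        rw [hgx, hgdef]
        group
      have hθeq : (⟨(tr (g • x))⁻¹ * g * tr x, hmem g x⟩ : stabilizer G (b x)) = gG :=
        Subtype.ext helem
      show k (g • x) * _ * (k x)⁻¹ = h
      rw [hθeq, hgGdef, MulEquiv.apply_symm_apply, hgx]
      show k x'' * ((k x'')⁻¹ * h * k x) * (k x)⁻¹ = h
      group
    refine ⟨fun p => (ψ p.1, σ p.1 p.2), ⟨?_, ?_⟩, ?_, ?_⟩
    · intro p q hpq
      have h1 : p.1 = q.1 := ψ.injective (Prod.ext_iff.1 hpq).1
      have h2' : σ p.1 p.2 = σ q.1 q.2 := (Prod.ext_iff.1 hpq).2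
      rw [← h1] at h2'
      exact Prod.ext h1 (hinjσ p.1 p.2 q.2 h2')
    · intro q
      obtain ⟨x, g, hx, hg⟩ := hsurjσ q.1 q.2
      exact ⟨(x, g), Prod.ext hx hg⟩
    · intro p
      constructor
      · show ((ψ p.1, (1:H)) : Y × H) = (ψ p.1, σ p.1 1)
        exact Prod.ext rfl (hσ1 p.1).symm
      · show ((σ p.1 p.2 • ψ p.1, (1:H)) : Y × H) = (ψ (p.2 • p.1), σ (p.2 • p.1) 1)
        rw [hσact, hσ1]
    · intro p q hpq
      have hcomp : p.1 = q.2 • q.1 := (Prod.ext_iff.1 hpq).1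
      have hcond : ψ p.1 = σ q.1 q.2 • ψ q.1 := by rw [hσact, hcomp]
      have hm1 : (actionCat G X).mul p q = (q.1, p.2 * q.2) := by
        show (if p.1 = q.2 • q.1 then ((q.1, p.2 * q.2) : X × G) else p) = _
        rw [if_pos hcomp]
      have hm2 : (actionCat H Y).mul (ψ p.1, σ p.1 p.2) (ψ q.1, σ q.1 q.2)
          = (ψ q.1, σ p.1 p.2 * σ q.1 q.2) := by
        show (if ψ p.1 = σ q.1 q.2 • ψ q.1 then ((ψ q.1, σ p.1 p.2 * σ q.1 q.2) : Y × H)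
            else (ψ p.1, σ p.1 p.2)) = _
        rw [if_pos hcond]
      rw [hm1, hm2]
      refine Prod.ext rfl ?_
      show σ q.1 (p.2 * q.2) = σ p.1 p.2 * σ q.1 q.2
      rw [← hσmul q.1 q.2 p.2, hcomp]
end

section
/- Let G be a groupoid acting on a small category H via a left action (φ, α). Define H ×_α G := {(h,g) : t(g) = φ(s(h)) = φ(t(h))}, with s(h,g) := α_{g⁻¹}(s(h)), t(h,g) := t(h), and composition (h,g)(h',g') := (h α_g(h'), gg') whenever s(α_{g⁻¹}(h)) = t(h'). Then H ×_α G is a small category (the composition is well defined and associative, and the elements (u, φ(u)) for u ∈ H⁽⁰⁾ serve as identities). -/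
universe u v

open Classical

variable {MG : Type u} {MH : Type v}

/-- The semi-direct product `H ×_α G` (for `G` a groupoid with inverse `invG`):
`s(h,g) = α_{g⁻¹}(s(h))` (an object, identified with the pair `(u, φ(u))`),
`t(h,g) = t(h)`, and `(h,g)(h',g') = (h α_g(h'), gg')` whenever
`s(α_{g⁻¹}(h)) = t(h')`. -/
noncomputable def SDcat (C : CatStruct MG) (D : CatStruct MH) (φ : MH → MG)
    (α : MG → MH → MH) (invG : MG → MG) : CatStruct (MH × MG) where
  s p := (α (invG p.2) (D.s p.1), φ (α (invG p.2) (D.s p.1)))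
  t p := (D.t p.1, φ (D.t p.1))
  mul p q := if D.s (α (invG p.2) p.1) = D.t q.1
    then (D.mul p.1 (α p.2 q.1), C.mul p.2 q.2) else p

/-- membership in `H ×_α G`: `t(g) = φ(s(h)) = φ(t(h))`. -/
def SDGood (C : CatStruct MG) (D : CatStruct MH) (φ : MH → MG) (p : MH × MG) : Prop :=
  C.t p.2 = φ (D.s p.1) ∧ C.t p.2 = φ (D.t p.1)

/-! STATEMENT 12: if a groupoid `G` acts on a small category `H` via a left action
`(φ, α)`, then `H ×_α G` is a small category. -/


section Aux

variable {C : CatStruct MG} {D : CatStruct MH} {φ : MH → MG}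
variable {α : MG → MH → MH} {invG : MG → MG}

lemma inv_obj (hC : C.IsGroupoid invG) {e : MG} (he : C.Obj e) : invG e = e := by
  obtain ⟨_, hse, hte, _, hmul⟩ := hC.2 e trivial
  have h1 : C.mul (invG e) (C.s (invG e)) = invG e := (hC.1.2.2.2.2 (invG e) trivial).2
  rw [hse, he.2] at h1
  exact (h1.symm.trans hmul).trans he.1

lemma obj_act (hC : C.IsGroupoid invG) (hD : D.IsCat) (hα : IsLeftAction C D φ α)
    {g : MG} {u : MH} (hu : D.Obj u) (hp : CompPair C D φ g u) : D.Obj (α g u) := by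
  obtain ⟨A0, A1, A2, A3, A4, A5, A6, A7⟩ := hα
  obtain ⟨_, hsg, htg, hgi, hig⟩ := hC.2 g trivial
  have hst : D.s (α g u) = D.t (α g u) := A1 g u hu hp
  have hwobj : D.Obj (D.s (α g u)) := (hD.1 (α g u) trivial).2
  have hφw : φ (D.s (α g u)) = C.t g := A4 g u hu hp
  have hcpv : CompPair C D φ (invG g) (α g u) :=
    ⟨by rw [hsg, ← hst, hφw], by rw [hsg, hφw]⟩
  have hcpw : CompPair C D φ (invG g) (D.s (α g u)) :=
    ⟨by rw [hsg, hwobj.2, hφw], by rw [hsg, hwobj.1, hφw]⟩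
  have hgiv : α (invG g) (α g u) = u := by
    rw [A6 (invG g) g u hp hsg, hig, show C.s g = φ (D.t u) from hp.1, A5 u]
  have hsx : D.s (α (invG g) (D.s (α g u))) = u := by
    have h2 := A2 (invG g) (α g u) hcpv
    rwa [hgiv, hu.1] at h2
  have htx : D.t (α (invG g) (D.s (α g u))) = u := by
    rw [← A1 (invG g) (D.s (α g u)) hwobj hcpw, hsx]
  have hA5w := A5 (D.s (α g u))
  rw [hwobj.2, hφw] at hA5w
  have hgx : α g (α (invG g) (D.s (α g u))) = D.s (α g u) := by
    rw [A6 g (invG g) (D.s (α g u)) hcpw htg.symm, hgi, hA5w]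
  have hidx : D.mul u (α (invG g) (D.s (α g u))) = α (invG g) (D.s (α g u)) := by
    have h3 := (hD.2.2.2.2 (α (invG g) (D.s (α g u))) trivial).1
    rwa [htx] at h3
  have hcpx : CompPair C D φ g (α (invG g) (D.s (α g u))) :=
    ⟨by rw [htx, ← hu.2]; exact hp.1, by rw [hsx, ← hu.2]; exact hp.1⟩
  have h7 := A7 g u (α (invG g) (D.s (α g u))) (hu.1.trans htx.symm) hcpx hp
  rw [hidx, hgx] at h7
  have h8 : D.mul (α g u) (D.s (α g u)) = α g u := (hD.2.2.2.2 (α g u) trivial).2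
  have hfin : D.s (α g u) = α g u := h7.trans h8
  exact ⟨hfin, hst.symm.trans hfin⟩

lemma act_s (hC : C.IsGroupoid invG) (hD : D.IsCat) (hα : IsLeftAction C D φ α)
    {g : MG} {h : MH} (hp : CompPair C D φ g h) : D.s (α g h) = α g (D.s h) := by
  have hobj : D.Obj (D.s h) := (hD.1 h trivial).2
  have hcp : CompPair C D φ g (D.s h) :=
    ⟨by rw [hobj.2]; exact hp.2, by rw [hobj.1]; exact hp.2⟩
  exact (hα.2.2.1 g h hp).symm.trans (obj_act hC hD hα hobj hcp).1

lemma act_t (hC : C.IsGroupoid invG) (hD : D.IsCat) (hα : IsLeftAction C D φ α)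
    {g : MG} {h : MH} (hp : CompPair C D φ g h) : D.t (α g h) = α g (D.t h) := by
  have hobj : D.Obj (D.t h) := (hD.2.1 h trivial).2
  have hcp : CompPair C D φ g (D.t h) :=
    ⟨by rw [hobj.2]; exact hp.1, by rw [hobj.1]; exact hp.1⟩
  exact (hα.2.2.2.1 g h hp).symm.trans (obj_act hC hD hα hobj hcp).2

lemma inv_mul_left (hC : C.IsGroupoid invG) {g g' : MG} (hgg : C.s g = C.t g') :
    C.mul (invG (C.mul g g')) g = invG g' := by
  obtain ⟨Gs, Gt, Gm, Gassoc, Gid⟩ := hC.1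
  obtain ⟨_, hsg', htg', hgi', hig'⟩ := hC.2 g' trivial
  obtain ⟨_, hsm, htm, hmi, him⟩ := hC.2 (C.mul g g') trivial
  have hmprop := Gm g g' trivial trivial hgg
  have hsim : C.s (invG (C.mul g g')) = C.t g := by rw [hsm, hmprop.2.2]
  have hsx : C.s (C.mul (invG (C.mul g g')) g) = C.s g :=
    (Gm (invG (C.mul g g')) g trivial trivial hsim).2.1
  have hx1 : C.mul (C.mul (invG (C.mul g g')) g) g' = C.s g' := by
    rw [Gassoc (invG (C.mul g g')) g g' trivial trivial trivial hsim hgg, him, hmprop.2.1]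
  calc C.mul (invG (C.mul g g')) g
      = C.mul (C.mul (invG (C.mul g g')) g) (C.s (C.mul (invG (C.mul g g')) g)) :=
        ((Gid _ trivial).2).symm
    _ = C.mul (C.mul (invG (C.mul g g')) g) (C.mul g' (invG g')) := by
        rw [hsx, hgg, hgi']
    _ = C.mul (C.mul (C.mul (invG (C.mul g g')) g) g') (invG g') :=
        (Gassoc _ g' (invG g') trivial trivial trivial (by rw [hsx, hgg]) htg'.symm).symm
    _ = C.mul (C.s g') (invG g') := by rw [hx1]
    _ = invG g' := by rw [← htg', (Gid (invG g') trivial).1]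

lemma good_facts (hC : C.IsGroupoid invG) (hD : D.IsCat) (hα : IsLeftAction C D φ α)
    {h : MH} {g : MG} (hp1 : C.t g = φ (D.s h)) (hp2 : C.t g = φ (D.t h)) :
    CompPair C D φ (invG g) h ∧ D.Obj (α (invG g) (D.s h)) ∧
    φ (α (invG g) (D.s h)) = C.s g ∧ D.s (α (invG g) h) = α (invG g) (D.s h) ∧
    α g (α (invG g) (D.s h)) = D.s h := by
  obtain ⟨_, hsg, htg, hgi, hig⟩ := hC.2 g trivial
  have hos : D.Obj (D.s h) := (hD.1 h trivial).2
  have f1 : CompPair C D φ (invG g) h := ⟨hsg.trans hp2, hsg.trans hp1⟩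
  have fcp : CompPair C D φ (invG g) (D.s h) :=
    ⟨by rw [hsg, hos.2]; exact hp1, by rw [hsg, hos.1]; exact hp1⟩
  have f2 : D.Obj (α (invG g) (D.s h)) := obj_act hC hD hα hos fcp
  have f3 : φ (α (invG g) (D.s h)) = C.s g := by
    have h4 := hα.2.2.2.2.1 (invG g) (D.s h) hos fcp
    rwa [f2.1, htg] at h4
  have f4 : D.s (α (invG g) h) = α (invG g) (D.s h) := act_s hC hD hα f1
  have f5 : α g (α (invG g) (D.s h)) = D.s h := by
    rw [hα.2.2.2.2.2.2.1 g (invG g) (D.s h) fcp htg.symm, hgi, hp1]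
    have h5 := hα.2.2.2.2.2.1 (D.s h)
    rwa [hos.2] at h5
  exact ⟨f1, f2, f3, f4, f5⟩

lemma mul_facts (hC : C.IsGroupoid invG) (hD : D.IsCat) (hα : IsLeftAction C D φ α)
    {h : MH} {g : MG} {h' : MH} {g' : MG}
    (hp1 : C.t g = φ (D.s h)) (hp2 : C.t g = φ (D.t h))
    (hq1 : C.t g' = φ (D.s h')) (hq2 : C.t g' = φ (D.t h'))
    (hVT : α (invG g) (D.s h) = D.t h') :
    C.s g = C.t g' ∧
    D.s (α (invG g) h) = D.t h' ∧
    CompPair C D φ g h' ∧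
    D.t (α g h') = D.s h ∧
    D.s (α g h') = α g (D.s h') ∧
    D.Obj (α g (D.s h')) ∧
    φ (α g (D.s h')) = C.t g ∧
    C.t g = φ (D.s (D.mul h (α g h'))) ∧
    C.t g = φ (D.t (D.mul h (α g h'))) ∧
    D.s (D.mul h (α g h')) = α g (D.s h') ∧
    D.t (D.mul h (α g h')) = D.t h ∧
    α (invG (C.mul g g')) (α g (D.s h')) = α (invG g') (D.s h') ∧
    C.s (C.mul g g') = C.s g' ∧ C.t (C.mul g g') = C.t g := by
  obtain ⟨f1, f2, f3, f4, f5⟩ := good_facts hC hD hα hp1 hp2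
  have sgtg' : C.s g = C.t g' := by rw [← f3, hVT]; exact hq2.symm
  have cond : D.s (α (invG g) h) = D.t h' := f4.trans hVT
  have cpg' : CompPair C D φ g h' :=
    ⟨by rw [← hVT]; exact f3.symm, by rw [sgtg']; exact hq1⟩
  have htα : D.t (α g h') = D.s h := by
    rw [act_t hC hD hα cpg', ← hVT, f5]
  have hsα : D.s (α g h') = α g (D.s h') := act_s hC hD hα cpg'
  have hos' : D.Obj (D.s h') := (hD.1 h' trivial).2
  have cpgs' : CompPair C D φ g (D.s h') :=
    ⟨by rw [hos'.2]; exact cpg'.2, by rw [hos'.1]; exact cpg'.2⟩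
  have oσ : D.Obj (α g (D.s h')) := obj_act hC hD hα hos' cpgs'
  have fφ : φ (α g (D.s h')) = C.t g := by
    have h6 := hα.2.2.2.2.1 g (D.s h') hos' cpgs'
    rwa [oσ.1] at h6
  have Dm := hD.2.2.1 h (α g h') trivial trivial htα.symm
  have g8 : C.t g = φ (D.s (D.mul h (α g h'))) := by rw [Dm.2.1, hsα, fφ]
  have g9 : C.t g = φ (D.t (D.mul h (α g h'))) := by rw [Dm.2.2]; exact hp2
  have Gm := hC.1.2.2.1 g g' trivial trivial sgtg'
  have inv_sw : α (invG (C.mul g g')) (α g (D.s h')) = α (invG g') (D.s h') := by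
    have hsi : C.s (invG (C.mul g g')) = C.t g := by
      rw [(hC.2 (C.mul g g') trivial).2.1, Gm.2.2]
    rw [hα.2.2.2.2.2.2.1 (invG (C.mul g g')) g (D.s h') cpgs' hsi,
        inv_mul_left hC sgtg']
  exact ⟨sgtg', cond, cpg', htα, hsα, oσ, fφ, g8, g9, Dm.2.1.trans hsα, Dm.2.2,
    inv_sw, Gm.2.1, Gm.2.2⟩

/-- facts about the target pair `(D.t h, φ (D.t h))`. -/
lemma tgt_facts (hC : C.IsGroupoid invG) (hD : D.IsCat) (hα : IsLeftAction C D φ α)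
    (h : MH) :
    C.Obj (φ (D.t h)) ∧ invG (φ (D.t h)) = φ (D.t h) ∧
    α (φ (D.t h)) (D.t h) = D.t h := by
  have hot : D.Obj (D.t h) := (hD.2.1 h trivial).2
  have hOT : C.Obj (φ (D.t h)) := hα.1 _ hot
  have h5 := hα.2.2.2.2.2.1 (D.t h)
  rw [hot.2] at h5
  exact ⟨hOT, inv_obj hC hOT, h5⟩

end Aux

theorem statement12 (C : CatStruct MG) (D : CatStruct MH) (φ : MH → MG)
    (α : MG → MH → MH) (invG : MG → MG)
    (hC : C.IsGroupoid invG) (hD : D.IsCat) (hα : IsLeftAction C D φ α) :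
    (SDcat C D φ α invG).IsCatOn (SDGood C D φ) := by
  refine ⟨?_, ?_, ?_, ?_, ?_⟩
  · -- sources
    rintro ⟨h, g⟩ hp
    replace hp : C.t g = φ (D.s h) ∧ C.t g = φ (D.t h) := hp
    obtain ⟨f1, f2, f3, f4, f5⟩ := good_facts hC hD hα hp.1 hp.2
    have hOV : C.Obj (φ (α (invG g) (D.s h))) := hα.1 _ f2
    have hαV : α (φ (α (invG g) (D.s h))) (α (invG g) (D.s h)) = α (invG g) (D.s h) := by
      have h5 := hα.2.2.2.2.2.1 (α (invG g) (D.s h))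
      rwa [f2.2] at h5
    refine ⟨⟨?_, ?_⟩, ?_, ?_⟩
    · show C.t (φ (α (invG g) (D.s h))) = φ (D.s (α (invG g) (D.s h)))
      rw [hOV.2, f2.1]
    · show C.t (φ (α (invG g) (D.s h))) = φ (D.t (α (invG g) (D.s h)))
      rw [hOV.2, f2.2]
    · simp only [SDcat]
      rw [inv_obj hC hOV, f2.1, hαV]
    · simp only [SDcat]
      rw [f2.2]
  · -- targets
    rintro ⟨h, g⟩ _
    obtain ⟨hOT, hIT, hAT⟩ := tgt_facts hC hD hα (C := C) (invG := invG) h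
    have hot : D.Obj (D.t h) := (hD.2.1 h trivial).2
    refine ⟨⟨?_, ?_⟩, ?_, ?_⟩
    · show C.t (φ (D.t h)) = φ (D.s (D.t h))
      rw [hOT.2, hot.1]
    · show C.t (φ (D.t h)) = φ (D.t (D.t h))
      rw [hOT.2, hot.2]
    · simp only [SDcat]
      rw [hIT, hot.1, hAT]
    · simp only [SDcat]
      rw [hot.2]
  · -- composition
    rintro ⟨h, g⟩ ⟨h', g'⟩ hp hq hst
    replace hp : C.t g = φ (D.s h) ∧ C.t g = φ (D.t h) := hp
    replace hq : C.t g' = φ (D.s h') ∧ C.t g' = φ (D.t h') := hq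
    have hVT : α (invG g) (D.s h) = D.t h' := congrArg Prod.fst hst
    obtain ⟨m1, m2, m3, m4, m5, m6, m7, m8, m9, m10, m11, m12, m13, m14⟩ :=
      mul_facts hC hD hα hp.1 hp.2 hq.1 hq.2 hVT
    have hmul : (SDcat C D φ α invG).mul (h, g) (h', g') =
        (D.mul h (α g h'), C.mul g g') := by
      simp only [SDcat]
      rw [if_pos m2]
    rw [hmul]
    refine ⟨⟨?_, ?_⟩, ?_, ?_⟩
    · show C.t (C.mul g g') = φ (D.s (D.mul h (α g h')))
      rw [m14]; exact m8
    · show C.t (C.mul g g') = φ (D.t (D.mul h (α g h')))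
      rw [m14]; exact m9
    · simp only [SDcat]
      rw [m10, m12]
    · simp only [SDcat]
      rw [m11]
  · -- associativity
    rintro ⟨h₁, g₁⟩ ⟨h₂, g₂⟩ ⟨h₃, g₃⟩ ha hb hc hab hbc
    replace ha : C.t g₁ = φ (D.s h₁) ∧ C.t g₁ = φ (D.t h₁) := ha
    replace hb : C.t g₂ = φ (D.s h₂) ∧ C.t g₂ = φ (D.t h₂) := hb
    replace hc : C.t g₃ = φ (D.s h₃) ∧ C.t g₃ = φ (D.t h₃) := hc
    have hVT₁ : α (invG g₁) (D.s h₁) = D.t h₂ := congrArg Prod.fst hab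
    have hVT₂ : α (invG g₂) (D.s h₂) = D.t h₃ := congrArg Prod.fst hbc
    obtain ⟨a1, a2, a3, a4, a5, a6, a7, a8, a9, a10, a11, a12, a13, a14⟩ :=
      mul_facts hC hD hα ha.1 ha.2 hb.1 hb.2 hVT₁
    obtain ⟨b1, b2, b3, b4, b5, b6, b7, b8, b9, b10, b11, b12, b13, b14⟩ :=
      mul_facts hC hD hα hb.1 hb.2 hc.1 hc.2 hVT₂
    have hm₁ : (SDcat C D φ α invG).mul (h₁, g₁) (h₂, g₂) =
        (D.mul h₁ (α g₁ h₂), C.mul g₁ g₂) := by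
      simp only [SDcat]; rw [if_pos a2]
    have hm₂ : (SDcat C D φ α invG).mul (h₂, g₂) (h₃, g₃) =
        (D.mul h₂ (α g₂ h₃), C.mul g₂ g₃) := by
      simp only [SDcat]; rw [if_pos b2]
    have hVTL : α (invG (C.mul g₁ g₂)) (D.s (D.mul h₁ (α g₁ h₂))) = D.t h₃ := by
      rw [a10, a12, hVT₂]
    obtain ⟨l1, l2, l3, l4, l5, l6, l7, l8, l9, l10, l11, l12, l13, l14⟩ :=
      mul_facts hC hD hα (a14.trans a8) (a14.trans a9) hc.1 hc.2 hVTL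
    have hVTR : α (invG g₁) (D.s h₁) = D.t (D.mul h₂ (α g₂ h₃)) :=
      hVT₁.trans b11.symm
    obtain ⟨r1, r2, r3, r4, r5, r6, r7, r8, r9, r10, r11, r12, r13, r14⟩ :=
      mul_facts hC hD hα ha.1 ha.2 (b14.trans b8) (b14.trans b9) hVTR
    have hmL : (SDcat C D φ α invG).mul (D.mul h₁ (α g₁ h₂), C.mul g₁ g₂) (h₃, g₃) =
        (D.mul (D.mul h₁ (α g₁ h₂)) (α (C.mul g₁ g₂) h₃), C.mul (C.mul g₁ g₂) g₃) := by
      simp only [SDcat]; rw [if_pos l2]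
    have hmR : (SDcat C D φ α invG).mul (h₁, g₁) (D.mul h₂ (α g₂ h₃), C.mul g₂ g₃) =
        (D.mul h₁ (α g₁ (D.mul h₂ (α g₂ h₃))), C.mul g₁ (C.mul g₂ g₃)) := by
      simp only [SDcat]; rw [if_pos r2]
    rw [hm₁, hm₂, hmL, hmR]
    have hGassoc : C.mul (C.mul g₁ g₂) g₃ = C.mul g₁ (C.mul g₂ g₃) :=
      hC.1.2.2.2.1 g₁ g₂ g₃ trivial trivial trivial a1 b1
    have cp₁₂₃ : CompPair C D φ g₁ (α g₂ h₃) := by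
      refine ⟨?_, ?_⟩
      · rw [b4]; exact a3.2
      · rw [b5, a1]; exact b7.symm
    have hsplit : α g₁ (D.mul h₂ (α g₂ h₃)) = D.mul (α g₁ h₂) (α g₁ (α g₂ h₃)) :=
      hα.2.2.2.2.2.2.2 g₁ h₂ (α g₂ h₃) b4.symm cp₁₂₃ a3
    have hcomp : α g₁ (α g₂ h₃) = α (C.mul g₁ g₂) h₃ :=
      hα.2.2.2.2.2.2.1 g₁ g₂ h₃ b3 a1
    have hDassoc : D.mul (D.mul h₁ (α g₁ h₂)) (α (C.mul g₁ g₂) h₃) =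
        D.mul h₁ (D.mul (α g₁ h₂) (α (C.mul g₁ g₂) h₃)) :=
      hD.2.2.2.1 h₁ (α g₁ h₂) (α (C.mul g₁ g₂) h₃) trivial trivial trivial
        a4.symm (by rw [a5, l4, a10])
    rw [hsplit, hcomp, hDassoc, hGassoc]
  · -- identities
    rintro ⟨h, g⟩ hp
    replace hp : C.t g = φ (D.s h) ∧ C.t g = φ (D.t h) := hp
    obtain ⟨f1, f2, f3, f4, f5⟩ := good_facts hC hD hα hp.1 hp.2
    obtain ⟨hOT, hIT, hAT⟩ := tgt_facts hC hD hα (C := C) (invG := invG) h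
    have hot : D.Obj (D.t h) := (hD.2.1 h trivial).2
    constructor
    · -- left identity
      show (SDcat C D φ α invG).mul (D.t h, φ (D.t h)) (h, g) = (h, g)
      have hcond : D.s (α (invG (φ (D.t h))) (D.t h)) = D.t h := by
        rw [hIT, hAT, hot.1]
      simp only [SDcat]
      rw [if_pos hcond, hα.2.2.2.2.2.1 h, (hD.2.2.2.2 h trivial).1, ← hp.2,
        (hC.1.2.2.2.2 g trivial).1]
    · -- right identity
      show (SDcat C D φ α invG).mul (h, g)
          (α (invG g) (D.s h), φ (α (invG g) (D.s h))) = (h, g)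
      have hcond : D.s (α (invG g) h) = D.t (α (invG g) (D.s h)) := f4.trans f2.2.symm
      simp only [SDcat]
      rw [if_pos hcond, f5, (hD.2.2.2.2 h trivial).2, f3, (hC.1.2.2.2.2 g trivial).2]
end

section
/- Let G be a groupoid acting on a small category H via (φ, α), let H' be the sub-semigroup-bundle of H (morphisms h with s(h) = t(h)), with induced action α'. Then the map Ψ : H ×_{α̃} G̃ → H' ×_{α'} G, Ψ(h, g) = (h, j(g)), is an isomorphism of categories, where G̃ is the restricted category with ᵤG̃ᵥ = {g : α_g(v) = u} and j : G̃ → G the canonical functor. -/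
universe u v

open Classical

variable {MG : Type u} {MH : Type v}

/-- The restricted category `G̃`: morphisms are triples `(u, g, v)` with `u, v`
objects of `H` and `g ∈ ᵤG̃ᵥ = {g ∈ _{φ(u)}G_{φ(v)} : α_g(v) = u}`; the identity at
`u` is `(u, φ(u), u)` and composition is `(u,g,v)(v,g',w) = (u, gg', w)`. -/
noncomputable def GtCat (C : CatStruct MG) (D : CatStruct MH) (φ : MH → MG) :
    CatStruct (MH × MG × MH) where
  s z := (z.2.2, φ z.2.2, z.2.2)
  t z := (z.1, φ z.1, z.1)
  mul z w := if z.2.2 = w.1 then (z.1, C.mul z.2.1 w.2.1, w.2.2) else z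

/-- `(u, g, v)` is a genuine morphism of `G̃`. -/
def GtGood (C : CatStruct MG) (D : CatStruct MH) (φ : MH → MG) (α : MG → MH → MH)
    (z : MH × MG × MH) : Prop :=
  D.Obj z.1 ∧ D.Obj z.2.2 ∧ C.t z.2.1 = φ z.1 ∧ C.s z.2.1 = φ z.2.2 ∧ α z.2.1 z.2.2 = z.1

/-- The semi-direct product `H ×_α̃ G̃` (object sets of `H` and `G̃` coincide):
morphisms `(h, (u,g,v))` with `t̃(u,g,v) = u = s(h) = t(h)`, structure as in the
equal-object-set semi-direct product, with `α̃_{(u,g,v)}(h') = α_g(h')`. -/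
noncomputable def SDtilde (C : CatStruct MG) (D : CatStruct MH) (φ : MH → MG)
    (α : MG → MH → MH) : CatStruct (MH × (MH × MG × MH)) where
  s p := (p.2.2.2, (p.2.2.2, φ p.2.2.2, p.2.2.2))
  t p := (D.t p.1, (D.t p.1, φ (D.t p.1), D.t p.1))
  mul p q := if p.2.2.2 = D.t q.1
    then (D.mul p.1 (α p.2.2.1 q.1), (p.2.1, C.mul p.2.2.1 q.2.2.1, q.2.2.2)) else p

/-- membership in `H ×_α̃ G̃`. -/
def SDtildeGood (C : CatStruct MG) (D : CatStruct MH) (φ : MH → MG)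
    (α : MG → MH → MH) (p : MH × (MH × MG × MH)) : Prop :=
  GtGood C D φ α p.2 ∧ p.2.1 = D.s p.1 ∧ D.s p.1 = D.t p.1

/-- membership in `H' ×_{α'} G`, where `H'` is the semi-group bundle of `H`
(morphisms with `s(h) = t(h)`). -/
def SDGood' (C : CatStruct MG) (D : CatStruct MH) (φ : MH → MG) (p : MH × MG) : Prop :=
  SDGood C D φ p ∧ D.s p.1 = D.t p.1

/-- Auxiliary: the inverse acts as inverse. -/
theorem aux_inv_cancel (C : CatStruct MG) (D : CatStruct MH) (φ : MH → MG)
    (α : MG → MH → MH) (invG : MG → MG)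
    (hC : C.IsGroupoid invG) (hα : IsLeftAction C D φ α)
    {g : MG} {h : MH} (hp : CompPair C D φ g h) :
    α (invG g) (α g h) = h := by
  obtain ⟨h0, h1, h2, h3, h4, h5, h6, h7⟩ := hα
  have hi := hC.2 g trivial
  rw [h6 _ _ _ hp hi.2.1, hi.2.2.2.2, hp.1, h5]

/-- Auxiliary: a groupoid element acting on an object gives an object. -/
theorem aux_obj_act (C : CatStruct MG) (D : CatStruct MH) (φ : MH → MG)
    (α : MG → MH → MH) (invG : MG → MG)
    (hC : C.IsGroupoid invG) (hD : D.IsCat) (hα : IsLeftAction C D φ α)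
    {g : MG} {u : MH} (hu : D.Obj u) (hp : CompPair C D φ g u) :
    D.Obj (α g u) := by
  have hcancel := aux_inv_cancel C D φ α invG hC hα hp
  obtain ⟨h0, h1, h2, h3, h4, h5, h6, h7⟩ := hα
  have hi := hC.2 g trivial
  set w := α g u with hwdef
  have hw1 : D.s w = D.t w := h1 g u hu hp
  have hw2 : φ (D.s w) = C.t g := h4 g u hu hp
  have hsw : D.Obj (D.s w) := (hD.1 w trivial).2
  have cpw : CompPair C D φ (invG g) w := by
    constructor
    · rw [hi.2.1, ← hw2, hw1]
    · rw [hi.2.1, ← hw2]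
  have cp' : CompPair C D φ (invG g) (D.s w) := by
    constructor
    · rw [hi.2.1, ← hw2, hsw.2]
    · rw [hi.2.1, ← hw2, hsw.1]
  set z := α (invG g) (D.s w) with hzdef
  have hz1 : D.s z = D.t z := h1 (invG g) (D.s w) hsw cp'
  have hz2 : D.s z = u := by
    have := h2 (invG g) w cpw
    rw [hzdef, this, hcancel, hu.1]
  have hz3 : D.t z = u := by rw [← hz1, hz2]
  have αgz : α g z = D.s w := by
    rw [hzdef, h6 g (invG g) (D.s w) cp' hi.2.2.1.symm, hi.2.2.2.1, ← hw2]
    nth_rewrite 1 [← hsw.2]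
    exact h5 (D.s w)
  have muz : D.mul u z = z := by
    have := (hD.2.2.2.2 z trivial).1
    rwa [hz3] at this
  have cpz : CompPair C D φ g z := by
    constructor
    · rw [hz3, hp.1, hu.2]
    · rw [hz2, hp.1, hu.2]
  have hmult := h7 g u z (by rw [hu.1, hz3]) cpz hp
  rw [muz, αgz, ← hwdef] at hmult
  have hww : D.mul w (D.s w) = w := (hD.2.2.2.2 w trivial).2
  rw [hww] at hmult
  exact ⟨hmult, by rw [← hw1, hmult]⟩

/-! STATEMENT 18: the map `Ψ(h, g) = (h, j(g))` is an isomorphism of categories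
from the restricted semi-direct product `H ×_α̃ G̃` onto `H' ×_{α'} G`. -/

theorem statement18 (C : CatStruct MG) (D : CatStruct MH) (φ : MH → MG)
    (α : MG → MH → MH) (invG : MG → MG)
    (hC : C.IsGroupoid invG) (hD : D.IsCat) (hα : IsLeftAction C D φ α) :
    (∀ p : MH × (MH × MG × MH), SDtildeGood C D φ α p → SDGood' C D φ (p.1, p.2.2.1)) ∧
    Set.BijOn (fun p : MH × (MH × MG × MH) => (p.1, p.2.2.1))
      {p | SDtildeGood C D φ α p} {q : MH × MG | SDGood' C D φ q} ∧
    (∀ p : MH × (MH × MG × MH), SDtildeGood C D φ α p →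
      (SDcat C D φ α invG).s (p.1, p.2.2.1)
        = (((SDtilde C D φ α).s p).1, ((SDtilde C D φ α).s p).2.2.1) ∧
      (SDcat C D φ α invG).t (p.1, p.2.2.1)
        = (((SDtilde C D φ α).t p).1, ((SDtilde C D φ α).t p).2.2.1)) ∧
    (∀ p q : MH × (MH × MG × MH), SDtildeGood C D φ α p → SDtildeGood C D φ α q →
      (SDtilde C D φ α).s p = (SDtilde C D φ α).t q →
      ((((SDtilde C D φ α).mul p q).1, ((SDtilde C D φ α).mul p q).2.2.1) : MH × MG)
        = (SDcat C D φ α invG).mul (p.1, p.2.2.1) (q.1, q.2.2.1)) := by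
  have h1 := hα.2.1
  have h2 := hα.2.2.1
  have h4 := hα.2.2.2.2.1
  have h5 := hα.2.2.2.2.2.1
  have h6 := hα.2.2.2.2.2.2.1
  have key : ∀ p : MH × (MH × MG × MH), SDtildeGood C D φ α p →
      SDGood' C D φ (p.1, p.2.2.1) := by
    rintro ⟨h, u, g, v⟩ ⟨⟨hOu, hOv, htg, hsg, hav⟩, hus, hst⟩
    exact ⟨⟨by rw [← hus]; exact htg, by rw [← hst, ← hus]; exact htg⟩, hst⟩
  refine ⟨key, ⟨fun p hp => key p hp, ?_, ?_⟩, ?_, ?_⟩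
  · -- injectivity
    rintro ⟨h, u, g, v⟩ hp ⟨h', u', g', v'⟩ hq heq
    obtain ⟨⟨hOu, hOv, htg, hsg, hav⟩, hus, hst⟩ := hp
    obtain ⟨⟨hOu', hOv', htg', hsg', hav'⟩, hus', hst'⟩ := hq
    dsimp only at *
    simp only [Prod.mk.injEq] at heq ⊢
    obtain ⟨eh, eg⟩ := heq
    subst eh; subst eg
    have cp : CompPair C D φ g v := ⟨by rw [hOv.2]; exact hsg, by rw [hOv.1]; exact hsg⟩
    have cp' : CompPair C D φ g v' :=
      ⟨by rw [hOv'.2]; exact hsg', by rw [hOv'.1]; exact hsg'⟩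
    have e1 := aux_inv_cancel C D φ α invG hC hα cp
    have e2 := aux_inv_cancel C D φ α invG hC hα cp'
    rw [hav] at e1; rw [hav'] at e2
    refine ⟨rfl, ?_, rfl, ?_⟩
    · rw [hus, hus']
    · rw [← e1, ← e2, hus, hus']
  · -- surjectivity
    rintro ⟨h, g⟩ ⟨⟨e1, e2⟩, e3⟩
    have hOu : D.Obj (D.s h) := (hD.1 h trivial).2
    have hi := hC.2 g trivial
    have cpinv : CompPair C D φ (invG g) (D.s h) :=
      ⟨by rw [hi.2.1, hOu.2]; exact e1, by rw [hi.2.1, hOu.1]; exact e1⟩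
    set v := α (invG g) (D.s h) with hvdef
    have hOv : D.Obj v := aux_obj_act C D φ α invG hC hD hα hOu cpinv
    have hav : α g v = D.s h := by
      rw [hvdef, h6 g (invG g) (D.s h) cpinv hi.2.2.1.symm, hi.2.2.2.1, e1]
      nth_rewrite 1 [← hOu.2]
      exact h5 (D.s h)
    have hsg : C.s g = φ v := by
      have := h4 (invG g) (D.s h) hOu cpinv
      rw [← hvdef, hOv.1, hi.2.2.1] at this
      exact this.symm
    exact ⟨(h, (D.s h, g, v)), ⟨⟨hOu, hOv, e1, hsg, hav⟩, rfl, e3⟩, rfl⟩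
  · -- source and target
    rintro ⟨h, u, g, v⟩ ⟨⟨hOu, hOv, htg, hsg, hav⟩, hus, hst⟩
    have cp : CompPair C D φ g v := ⟨by rw [hOv.2]; exact hsg, by rw [hOv.1]; exact hsg⟩
    have e1 := aux_inv_cancel C D φ α invG hC hα cp
    rw [hav] at e1
    constructor
    · simp only [SDcat, SDtilde]
      rw [← hus, e1]
    · rfl
  · -- multiplication
    rintro ⟨h, u, g, v⟩ ⟨h', u', g', v'⟩ hp hq hst_eq
    obtain ⟨⟨hOu, hOv, htg, hsg, hav⟩, hus, hst⟩ := hp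
    obtain ⟨⟨hOu', hOv', htg', hsg', hav'⟩, hus', hst'⟩ := hq
    have hv : v = D.t h' := congrArg Prod.fst hst_eq
    have hi := hC.2 g trivial
    have cp : CompPair C D φ g v := ⟨by rw [hOv.2]; exact hsg, by rw [hOv.1]; exact hsg⟩
    have e1 := aux_inv_cancel C D φ α invG hC hα cp
    rw [hav] at e1
    have cpgh : CompPair C D φ (invG g) h :=
      ⟨by rw [hi.2.1, ← hst, ← hus]; exact htg, by rw [hi.2.1, ← hus]; exact htg⟩
    have hcond : D.s (α (invG g) h) = D.t h' := by
      rw [← h2 (invG g) h cpgh, ← hus, e1, hOv.1]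
      exact hv
    simp only [SDcat, SDtilde]
    rw [if_pos hv, if_pos hcond]
end
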